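/- arXiv:1307.8402 — 2 statements merged into one kernel-verified Lean document; each statement's English description precedes it below -/
import Mathlib

section
/- Let s₀, y' ∈ ℝ and 0 < α' ≤ α. Then {z ∈ ℍ : dist z (y' + αi) < log(e^{s₀}/α)} ⊆ {z ∈ ℍ : dist z (y' + α'i) < log(e^{s₀}/α')}. -/
/-!
With `E = exp s₀` and `z = x + iy`, the formula for `cosh ∘ dist` turns membership of `z` in the
ball of radius `log (E / α)` about `y' + αi` into `α < E` together with
`(x - y')² E < (E - y)(yE - α²)`. In particular `y < E`, so the right-hand side only grows as `α`
decreases.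
-/

/-- The point `y' + α i` of the upper half-plane, for `α > 0`. -/
noncomputable def hpt (y' α : ℝ) (hα : 0 < α) : UpperHalfPlane :=
  ⟨(y' : ℂ) + (α : ℂ) * Complex.I, by simpa using hα⟩

lemma dist_lt_iff_cosh_dist_lt {X : Type*} [PseudoMetricSpace X] (z w : X) (r : ℝ) :
    dist z w < r ↔ 0 < r ∧ Real.cosh (dist z w) < Real.cosh r := by
  constructor
  · intro h
    have hr : 0 < r := dist_nonneg.trans_lt h
    refine ⟨hr, Real.cosh_lt_cosh.2 ?_⟩
    rwa [abs_of_nonneg dist_nonneg, abs_of_pos hr]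
  · rintro ⟨hr, h⟩
    rwa [Real.cosh_lt_cosh, abs_of_nonneg dist_nonneg, abs_of_pos hr] at h

namespace UpperHalfPlane

@[simp]
lemma hpt_im (y' α : ℝ) (hα : 0 < α) : (hpt y' α hα).im = α := by
  simp [hpt, UpperHalfPlane.im]

@[simp]
lemma hpt_re (y' α : ℝ) (hα : 0 < α) : (hpt y' α hα).re = y' := by
  simp [hpt, UpperHalfPlane.re]

lemma dist_hpt_lt_log_iff (z : ℍ) (y' : ℝ) {α E : ℝ} (hα : 0 < α) (hE : 0 < E) :
    dist z (hpt y' α hα) < Real.log (E / α) ↔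
      α < E ∧ (z.re - y') ^ 2 * E < (E - z.im) * (z.im * E - α ^ 2) := by
  have hy := z.im_pos
  rw [dist_lt_iff_cosh_dist_lt, Real.log_pos_iff (by positivity), one_lt_div hα,
    cosh_dist', Real.cosh_log (by positivity), hpt_re, hpt_im, inv_div,
    div_lt_div_iff₀ (by positivity) two_pos]
  refine and_congr_right fun _ => ?_
  rw [div_add_div _ _ hα.ne' hE.ne', div_mul_eq_mul_div, lt_div_iff₀ (by positivity)]
  constructor <;> intro h <;> nlinarith [mul_pos hy hα]

end UpperHalfPlane

/-- Decreasing the height `α` of the center while keeping `s₀` fixed enlarges the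
hyperbolic ball: the nesting of the balls in the description of `𝒟_{s₀}(Γ)`. -/
theorem stmt_2 (s₀ y' α α' : ℝ) (hα' : 0 < α') (h : α' ≤ α) :
    {z : UpperHalfPlane | dist z (hpt y' α (hα'.trans_le h)) < Real.log (Real.exp s₀ / α)} ⊆
    {z : UpperHalfPlane | dist z (hpt y' α' hα') < Real.log (Real.exp s₀ / α')} := by
  intro z hz
  set E := Real.exp s₀
  have hE : 0 < E := Real.exp_pos s₀
  obtain ⟨hαE, hball⟩ := (UpperHalfPlane.dist_hpt_lt_log_iff z y' _ hE).1 hz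
  have him : z.im < E := by
    by_contra! hle
    have : (E - z.im) * (z.im * E - α ^ 2) ≤ 0 :=
      mul_nonpos_of_nonpos_of_nonneg (by linarith) (by nlinarith)
    nlinarith [sq_nonneg (z.re - y')]
  refine (UpperHalfPlane.dist_hpt_lt_log_iff z y' hα' hE).2 ⟨h.trans_lt hαE, hball.trans_le ?_⟩
  gcongr
end

section
/- Let (X, μ) be a measure space, N ∈ ℕ, and φ₁, …, φ_N an orthonormal family in the real Hilbert space L²(X, μ). Let H_ac = {f ∈ L²(X, μ) : ⟨f, φ_j⟩ = 0 for all j}, let K be a real Hilbert space, V : H_ac → K a linear isometry, A ⊆ X measurable, and M = {V f : f ∈ H_ac, f = 0 almost everywhere on X ∖ A}. Assume the N × N Gram matrix G with entries G_{jk} = ⟨1_A·φ_j, 1_A·φ_k⟩ is invertible. Then M is a closed subspace of K, and for every f ∈ H_ac there exist unique real numbers α₁, …, α_N with ⟨f, 1_A·φ_k⟩ = Σ_j G_{kj} α_j for every k; for this choice the function 1_A·(f − Σ_j α_j φ_j) belongs to H_ac and the orthogonal projection of V f onto M equals V(1_A·(f − Σ_j α_j φ_j)). -/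
/-
The multiplication operator `P f = 1_A f` is a self-adjoint idempotent on `L²(X, μ)`, i.e. the
orthogonal projection onto the functions vanishing off `A`. The normal equations
`⟨f, P φ_k⟩ = Σ_j ⟨P φ_k, P φ_j⟩ α_j` say exactly that `g = P (f - Σ_j α_j φ_j)` is orthogonal to
every `φ_k`, so `g ∈ H_ac`; and for `h ∈ H_ac` with `P h = h` self-adjointness gives
`⟨f - g, h⟩ = Σ_j α_j ⟨φ_j, h⟩ = 0`. Since `V` is an isometry it preserves inner products, which
transports both facts to `K`; completeness of `H_ac` makes the image `M` closed.
-/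

open MeasureTheory

/-- The element of `L²(X, μ)` obtained by multiplying `f` pointwise by the indicator
function of the set `A`. -/
noncomputable def indLp {X : Type*} [MeasurableSpace X] {μ : Measure X}
    (A : Set X) (hA : MeasurableSet A) (f : Lp ℝ 2 μ) : Lp ℝ 2 μ :=
  ((Lp.memLp f).indicator hA).toLp (A.indicator f)

open scoped ENNReal InnerProductSpace

namespace LinearMap.IsSymmetric

variable {E ι : Type*} [NormedAddCommGroup E] [InnerProductSpace ℝ E] [Fintype ι]
  {P : E →ₗ[ℝ] E} (hP : P.IsSymmetric) {φ : ι → E} {f : E} {α : ι → ℝ}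
include hP

theorem inner_map_sub_sum_smul_eq_zero (hPP : ∀ x, P (P x) = P x)
    (hα : ∀ k, ⟪f, P (φ k)⟫_ℝ = ∑ j, ⟪P (φ k), P (φ j)⟫_ℝ * α j) (k : ι) :
    ⟪P (f - ∑ j, α j • φ j), φ k⟫_ℝ = 0 := by
  have hgram : ∀ j, ⟪P (φ k), P (φ j)⟫_ℝ = ⟪φ j, P (φ k)⟫_ℝ := fun j => by
    rw [← hP, hPP, real_inner_comm]
  rw [hP, inner_sub_left, sum_inner, hα k]
  simp only [real_inner_smul_left, hgram, mul_comm, sub_self]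

theorem inner_sub_map_sub_sum_smul_eq_zero {h : E} (hPh : P h = h)
    (hφh : ∀ j, ⟪φ j, h⟫_ℝ = 0) :
    ⟪f - P (f - ∑ j, α j • φ j), h⟫_ℝ = 0 := by
  rw [inner_sub_left, hP, hPh, inner_sub_left, sum_inner]
  simp [real_inner_smul_left, hφh]

end LinearMap.IsSymmetric

theorem isClosed_setOf_forall_inner_eq_zero {E ι : Type*} [NormedAddCommGroup E]
    [InnerProductSpace ℝ E] (φ : ι → E) : IsClosed {f : E | ∀ j, ⟪f, φ j⟫_ℝ = 0} := by
  simp only [Set.ofPred_forall]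
  exact isClosed_iInter fun j => isClosed_eq (continuous_id.inner continuous_const)
    continuous_const

theorem LinearIsometry.isClosed_image {E F : Type*} [NormedAddCommGroup E] [NormedSpace ℝ E]
    [CompleteSpace E] [NormedAddCommGroup F] [NormedSpace ℝ F] (V : E →ₗᵢ[ℝ] F) {s : Set E}
    (hs : IsClosed s) : IsClosed (V '' s) :=
  V.isometry.isClosedEmbedding.isClosedMap s hs

namespace MeasureTheory.Lp

variable {X : Type*} [MeasurableSpace X]

def vanishingOff (E : Type*) [NormedAddCommGroup E] [NormedSpace ℝ E] (p : ℝ≥0∞)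
    (μ : Measure X) (A : Set X) : Submodule ℝ (Lp E p μ) where
  carrier := {f | f =ᵐ[μ.restrict Aᶜ] 0}
  zero_mem' := ae_restrict_of_ae (Lp.coeFn_zero E p μ)
  add_mem' {f g} hf hg := by
    change f + g =ᵐ[μ.restrict Aᶜ] 0
    filter_upwards [ae_restrict_of_ae (Lp.coeFn_add f g), hf, hg] with x h hfx hgx
    rw [h, Pi.add_apply, hfx, hgx, Pi.zero_apply, add_zero]
  smul_mem' c f hf := by
    change c • f =ᵐ[μ.restrict Aᶜ] 0
    filter_upwards [ae_restrict_of_ae (Lp.coeFn_smul c f), hf] with x h hfx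
    rw [h, Pi.smul_apply, hfx, Pi.zero_apply, smul_zero]

theorem isClosed_vanishingOff {E : Type*} [NormedAddCommGroup E] [NormedSpace ℝ E] {p : ℝ≥0∞}
    [Fact (1 ≤ p)] {μ : Measure X} {A : Set X} :
    IsClosed (vanishingOff E p μ A : Set (Lp E p μ)) := by
  have : vanishingOff E p μ A = (LpToLpRestrictCLM X E ℝ μ p Aᶜ).ker := by
    ext f
    rw [LinearMap.mem_ker, Lp.eq_zero_iff_ae_eq_zero]
    exact ⟨(LpToLpRestrictCLM_coeFn ℝ Aᶜ f).trans, (LpToLpRestrictCLM_coeFn ℝ Aᶜ f).symm.trans⟩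
  rw [this]
  exact ContinuousLinearMap.isClosed_ker _

end MeasureTheory.Lp

section indLp

variable {X : Type*} [MeasurableSpace X] {μ : Measure X} {A : Set X} (hA : MeasurableSet A)

theorem coeFn_indLp (f : Lp ℝ 2 μ) : indLp A hA f =ᵐ[μ] A.indicator f :=
  MemLp.coeFn_toLp _

theorem indLp_add (f g : Lp ℝ 2 μ) : indLp A hA (f + g) = indLp A hA f + indLp A hA g := by
  refine Lp.ext ?_
  filter_upwards [coeFn_indLp hA (f + g), coeFn_indLp hA f, coeFn_indLp hA g,
    Lp.coeFn_add f g, Lp.coeFn_add (indLp A hA f) (indLp A hA g)] with x h hf hg hfg hsum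
  rw [h, hsum, Pi.add_apply, hf, hg]
  by_cases hx : x ∈ A
  · simp only [Set.indicator_of_mem hx, hfg, Pi.add_apply]
  · simp only [Set.indicator_of_notMem hx, add_zero]

theorem indLp_smul (c : ℝ) (f : Lp ℝ 2 μ) : indLp A hA (c • f) = c • indLp A hA f := by
  refine Lp.ext ?_
  filter_upwards [coeFn_indLp hA (c • f), coeFn_indLp hA f, Lp.coeFn_smul c f,
    Lp.coeFn_smul c (indLp A hA f)] with x h hf hcf hsmul
  rw [h, hsmul, Pi.smul_apply, hf]
  by_cases hx : x ∈ A
  · simp only [Set.indicator_of_mem hx, hcf, Pi.smul_apply]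
  · simp only [Set.indicator_of_notMem hx, smul_zero]

noncomputable def indLpₗ : Lp ℝ 2 μ →ₗ[ℝ] Lp ℝ 2 μ where
  toFun := indLp A hA
  map_add' := indLp_add hA
  map_smul' := indLp_smul hA

theorem indLpₗ_apply (f : Lp ℝ 2 μ) : indLpₗ hA f = indLp A hA f := rfl

theorem isSymmetric_indLpₗ : (indLpₗ hA : Lp ℝ 2 μ →ₗ[ℝ] Lp ℝ 2 μ).IsSymmetric := by
  intro f g
  rw [indLpₗ_apply, indLpₗ_apply, L2.inner_def, L2.inner_def]
  refine integral_congr_ae ?_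
  filter_upwards [coeFn_indLp hA f, coeFn_indLp hA g] with x hf hg
  rw [hf, hg]
  by_cases hx : x ∈ A <;> simp [hx]

theorem indLp_mem_vanishingOff (f : Lp ℝ 2 μ) : indLp A hA f ∈ Lp.vanishingOff ℝ 2 μ A :=
  Filter.EventuallyEq.trans (ae_restrict_of_ae (coeFn_indLp hA f))
    (indicator_ae_eq_restrict_compl hA)

theorem indLp_eq_self_of_mem_vanishingOff {f : Lp ℝ 2 μ} (hf : f ∈ Lp.vanishingOff ℝ 2 μ A) :
    indLp A hA f = f :=
  Lp.ext ((coeFn_indLp hA f).trans (indicator_ae_eq_of_restrict_compl_ae_eq_zero hA hf))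

theorem indLp_indLp (f : Lp ℝ 2 μ) : indLp A hA (indLp A hA f) = indLp A hA f :=
  indLp_eq_self_of_mem_vanishingOff hA (indLp_mem_vanishingOff hA f)

end indLp

theorem stmt_16_general {X : Type*} [MeasurableSpace X] (μ : Measure X) (N : ℕ)
    (φ : Fin N → Lp ℝ 2 μ)
    (Hac : Submodule ℝ (Lp ℝ 2 μ))
    (hHac : ∀ f : Lp ℝ 2 μ, f ∈ Hac ↔ ∀ j, (inner ℝ f (φ j) : ℝ) = 0)
    {K : Type*} [NormedAddCommGroup K] [InnerProductSpace ℝ K]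
    (V : Hac →ₗᵢ[ℝ] K) (A : Set X) (hA : MeasurableSet A)
    (M : Set K)
    (hM : M = {k : K | ∃ f : Hac,
      (⇑(f : Lp ℝ 2 μ) : X → ℝ) =ᵐ[μ.restrict Aᶜ] 0 ∧ V f = k})
    (G : Matrix (Fin N) (Fin N) ℝ)
    (hG : ∀ j k, G j k = (inner ℝ (indLp A hA (φ j)) (indLp A hA (φ k)) : ℝ))
    (hGinv : IsUnit G) :
    (IsClosed M ∧ (0 : K) ∈ M ∧ (∀ a b : K, a ∈ M → b ∈ M → a + b ∈ M) ∧
      ∀ (c : ℝ) (a : K), a ∈ M → c • a ∈ M) ∧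
    ∀ f : Hac,
      (∃! α : Fin N → ℝ,
        ∀ k, (inner ℝ ((f : Lp ℝ 2 μ)) (indLp A hA (φ k)) : ℝ) = ∑ j, G k j * α j) ∧
      ∀ α : Fin N → ℝ,
        (∀ k, (inner ℝ ((f : Lp ℝ 2 μ)) (indLp A hA (φ k)) : ℝ) = ∑ j, G k j * α j) →
        ∃ hg : indLp A hA ((f : Lp ℝ 2 μ) - ∑ j, α j • φ j) ∈ Hac,
          V ⟨indLp A hA ((f : Lp ℝ 2 μ) - ∑ j, α j • φ j), hg⟩ ∈ M ∧
          ∀ w ∈ M,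
            (inner ℝ (V f - V ⟨indLp A hA ((f : Lp ℝ 2 μ) - ∑ j, α j • φ j), hg⟩) w : ℝ) = 0 := by
  set S := (Lp.vanishingOff ℝ 2 μ A).comap Hac.subtype
  obtain rfl : M = S.map V.toLinearMap := hM
  have hHac_closed : IsClosed (Hac : Set (Lp ℝ 2 μ)) :=
    (Set.ext hHac : (Hac : Set (Lp ℝ 2 μ)) = _) ▸ isClosed_setOf_forall_inner_eq_zero φ
  have : CompleteSpace Hac := hHac_closed.completeSpace_coe
  refine ⟨⟨?_, zero_mem _, fun _ _ => add_mem, fun c _ => Submodule.smul_mem _ c⟩,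
    fun f => ⟨?_, fun α hα => ?_⟩⟩
  · rw [Submodule.map_coe]
    exact V.isClosed_image (Lp.isClosed_vanishingOff.preimage continuous_subtype_val)
  · have hbij : Function.Bijective G.mulVec :=
      ⟨Matrix.mulVec_injective_iff_isUnit.2 hGinv, Matrix.mulVec_surjective_iff_isUnit.2 hGinv⟩
    refine (existsUnique_congr fun α => ?_).1
      (hbij.existsUnique fun k => ⟪(f : Lp ℝ 2 μ), indLp A hA (φ k)⟫_ℝ)
    exact funext_iff.trans (forall_congr' fun k => eq_comm)
  · have hg : indLp A hA ((f : Lp ℝ 2 μ) - ∑ j, α j • φ j) ∈ Hac :=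
      (hHac _).2 ((isSymmetric_indLpₗ hA).inner_map_sub_sum_smul_eq_zero (indLp_indLp hA)
        (by simpa only [hG, indLpₗ_apply] using hα))
    refine ⟨hg, ⟨⟨_, hg⟩, indLp_mem_vanishingOff hA _, rfl⟩, ?_⟩
    rintro _ ⟨h, hh, rfl⟩
    rw [LinearIsometry.coe_toLinearMap, ← map_sub, V.inner_map_map, Submodule.coe_inner]
    exact (isSymmetric_indLpₗ hA).inner_sub_map_sub_sum_smul_eq_zero
      (indLp_eq_self_of_mem_vanishingOff hA hh)
      fun j => (real_inner_comm _ _).trans ((hHac h).1 h.2 j)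

/-- Hilbert-space content of Lemma 4.3 (the case with eigenvalues): `φ₁, …, φ_N` is an
orthonormal family in `L²(X,μ)`, `H_ac` its orthogonal complement, `V : H_ac → K` a linear
isometry, `A ⊆ X` measurable, `M = {V f : f ∈ H_ac, f = 0` a.e. on `X ∖ A}`, and the Gram
matrix `G_{jk} = ⟨1_A φ_j, 1_A φ_k⟩` invertible. Then `M` is a closed subspace of `K`; for
every `f ∈ H_ac` the linear system `⟨f, 1_A φ_k⟩ = Σ_j G_{kj} α_j` has a unique solution
`α`, and for this `α` the function `1_A (f − Σ_j α_j φ_j)` lies in `H_ac` and the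
orthogonal projection of `V f` onto `M` equals `V (1_A (f − Σ_j α_j φ_j))`. -/
theorem stmt_16 {X : Type*} [MeasurableSpace X] (μ : Measure X) (N : ℕ)
    (φ : Fin N → Lp ℝ 2 μ) (hφ : Orthonormal ℝ φ)
    (Hac : Submodule ℝ (Lp ℝ 2 μ))
    (hHac : ∀ f : Lp ℝ 2 μ, f ∈ Hac ↔ ∀ j, (inner ℝ f (φ j) : ℝ) = 0)
    {K : Type*} [NormedAddCommGroup K] [InnerProductSpace ℝ K] [CompleteSpace K]
    (V : Hac →ₗᵢ[ℝ] K) (A : Set X) (hA : MeasurableSet A)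
    (M : Set K)
    (hM : M = {k : K | ∃ f : Hac,
      (⇑(f : Lp ℝ 2 μ) : X → ℝ) =ᵐ[μ.restrict Aᶜ] 0 ∧ V f = k})
    (G : Matrix (Fin N) (Fin N) ℝ)
    (hG : ∀ j k, G j k = (inner ℝ (indLp A hA (φ j)) (indLp A hA (φ k)) : ℝ))
    (hGinv : IsUnit G) :
    (IsClosed M ∧ (0 : K) ∈ M ∧ (∀ a b : K, a ∈ M → b ∈ M → a + b ∈ M) ∧
      ∀ (c : ℝ) (a : K), a ∈ M → c • a ∈ M) ∧
    ∀ f : Hac,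
      (∃! α : Fin N → ℝ,
        ∀ k, (inner ℝ ((f : Lp ℝ 2 μ)) (indLp A hA (φ k)) : ℝ) = ∑ j, G k j * α j) ∧
      ∀ α : Fin N → ℝ,
        (∀ k, (inner ℝ ((f : Lp ℝ 2 μ)) (indLp A hA (φ k)) : ℝ) = ∑ j, G k j * α j) →
        ∃ hg : indLp A hA ((f : Lp ℝ 2 μ) - ∑ j, α j • φ j) ∈ Hac,
          V ⟨indLp A hA ((f : Lp ℝ 2 μ) - ∑ j, α j • φ j), hg⟩ ∈ M ∧
          ∀ w ∈ M,
            (inner ℝ (V f - V ⟨indLp A hA ((f : Lp ℝ 2 μ) - ∑ j, α j • φ j), hg⟩) w : ℝ) = 0 :=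
  stmt_16_general μ N φ Hac hHac V A hA M hM G hG hGinv
end
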